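/- For every positive integer p, Σ_{n=1}^{∞} H_n / n^{2p+1} = (1/2) · Σ_{j=2}^{2p} (-1)^j · ζ(j) · ζ(2p - j + 2), where H_n = Σ_{k=1}^n 1/k and ζ is the Riemann zeta function. (Georgiou–Philippou formula.) -/

import Mathlib

/-!
Telescoping gives `H_n / n = ∑_{m ≥ 1} 1 / (m (n+m))`, so the left side is the Tornheim double
sum `T(2p,1,1) = ∑_{n,m ≥ 1} 1 / (n^{2p} m (n+m))`. For `u = 1/x`, `v = 1/y` the
alternating sum `∑_{j=2}^{2p} (-1)^j u^j v^{2p+2-j}` is a geometric sum with ratio `-u/v`; it equals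
`(u^{2p+1} v^2 + u^2 v^{2p+1}) / (u+v) = 1 / (x y^{2p} (x+y)) + 1 / (x^{2p} y (x+y))`. Summing over
`x, y ≥ 1` turns the right side into `(T(1,2p,1) + T(2p,1,1)) / 2`, which is `T(2p,1,1)` by symmetry.
-/

/-- The n-th harmonic number `H_n = ∑_{k=1}^n 1/k`. -/
noncomputable def H (n : ℕ) : ℝ := ∑ k ∈ Finset.Icc 1 n, (1 : ℝ) / k

open Finset Filter Topology

/-- Summand of Tornheim's double series `∑_{m,n ≥ 1} m⁻ʳ n⁻ˢ (m+n)⁻ᵗ`, indexed from `0`. -/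
noncomputable def tornheimTerm (r s t : ℕ) (x : ℕ × ℕ) : ℝ :=
  1 / (((x.1 : ℝ) + 1) ^ r * ((x.2 : ℝ) + 1) ^ s * ((x.1 : ℝ) + x.2 + 2) ^ t)

lemma tornheimTerm_swap (r s t : ℕ) (x : ℕ × ℕ) :
    tornheimTerm r s t x.swap = tornheimTerm s r t x := by
  simp only [tornheimTerm, Prod.fst_swap, Prod.snd_swap]
  ring_nf

lemma hasSum_sub_add_of_antitone {f : ℕ → ℝ} (hf : Antitone f) (hlim : Tendsto f atTop (𝓝 0))
    (c : ℕ) : HasSum (fun m ↦ f m - f (m + c)) (∑ i ∈ range c, f i) := by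
  have hpartial (M : ℕ) : ∑ m ∈ range M, (f m - f (m + c)) =
      ∑ i ∈ range c, f i - ∑ i ∈ range c, f (M + i) := by
    have h₁ := sum_range_add f M c
    have h₂ := sum_range_add f c M
    simp only [add_comm c M, add_comm c] at h₂
    rw [sum_sub_distrib]
    linarith
  rw [hasSum_iff_tendsto_nat_of_nonneg fun m ↦ sub_nonneg.2 (hf (Nat.le_add_right m c))]
  have htail : Tendsto (fun M ↦ ∑ i ∈ range c, f (M + i)) atTop (𝓝 0) := by
    simpa using tendsto_finsetSum (range c) fun i _ ↦ hlim.comp (tendsto_add_atTop_nat i)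
  simpa [hpartial] using tendsto_const_nhds.sub htail

lemma H_eq_sum_range (n : ℕ) : H n = ∑ i ∈ range n, 1 / ((i : ℝ) + 1) := by
  rw [H, ← Ico_add_one_right_eq_Icc, sum_Ico_eq_sum_range, add_tsub_cancel_right]
  push_cast
  simp only [add_comm]

lemma hasSum_one_div_add_one_sub_one_div_add (c : ℕ) :
    HasSum (fun m : ℕ ↦ 1 / ((m : ℝ) + 1) - 1 / ((m : ℝ) + c + 1)) (H c) := by
  rw [H_eq_sum_range]
  convert hasSum_sub_add_of_antitone (f := fun m : ℕ ↦ 1 / ((m : ℝ) + 1))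
    (fun a b hab ↦ one_div_le_one_div_of_le (by positivity) (by gcongr))
    tendsto_one_div_add_atTop_nhds_zero_nat c using 3 with m
  push_cast
  ring

lemma hasSum_tornheimTerm_fiber (q n : ℕ) :
    HasSum (fun m ↦ tornheimTerm q 1 1 (n, m)) (H (n + 1) / ((n : ℝ) + 1) ^ (q + 1)) := by
  refine ((hasSum_one_div_add_one_sub_one_div_add (n + 1)).div_const
    (((n : ℝ) + 1) ^ (q + 1))).congr_fun fun m ↦ ?_
  simp only [tornheimTerm]
  push_cast
  field_simp
  ring

lemma summable_one_div_nat_add_one_pow {k : ℕ} (hk : 1 < k) :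
    Summable fun n : ℕ ↦ 1 / ((n : ℝ) + 1) ^ k := by
  simpa using (summable_nat_add_iff 1).2 (Real.summable_one_div_nat_pow.2 hk)

lemma summable_tornheimTerm {q : ℕ} (hq : 1 < q) : Summable (tornheimTerm q 1 1) := by
  refine ((summable_one_div_nat_add_one_pow hq).mul_of_nonneg
    (summable_one_div_nat_add_one_pow one_lt_two) (fun _ ↦ by positivity)
    (fun _ ↦ by positivity)).of_nonneg_of_le (fun _ ↦ by simp only [tornheimTerm]; positivity)
    fun x ↦ ?_
  rw [tornheimTerm, div_mul_div_comm, one_mul, pow_one, pow_one, sq, ← mul_assoc]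
  gcongr
  · norm_num
  · linarith

lemma hasSum_harmonic_div_pow {q : ℕ} (hq : 1 < q) :
    HasSum (fun n : ℕ ↦ H (n + 1) / ((n : ℝ) + 1) ^ (q + 1)) (∑' x, tornheimTerm q 1 1 x) :=
  (summable_tornheimTerm hq).hasSum.prod_fiberwise (hasSum_tornheimTerm_fiber q)

lemma add_mul_sum_Icc_neg_one_pow_mul_pow {R : Type*} [CommRing R] (u v : R) {p : ℕ}
    (hp : 0 < p) :
    (u + v) * ∑ j ∈ Icc 2 (2 * p), (-1) ^ j * (u ^ j * v ^ (2 * p - j + 2)) =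
      u ^ (2 * p + 1) * v ^ 2 + u ^ 2 * v ^ (2 * p + 1) := by
  obtain ⟨n, rfl⟩ : ∃ n, p = n + 1 := ⟨p - 1, by omega⟩
  have hsum : ∑ j ∈ Icc 2 (2 * (n + 1)), (-1) ^ j * (u ^ j * v ^ (2 * (n + 1) - j + 2)) =
      u ^ 2 * v ^ 2 * ∑ i ∈ range (2 * n + 1), (-u) ^ i * v ^ (2 * n + 1 - 1 - i) := by
    rw [← Ico_add_one_right_eq_Icc, sum_Ico_eq_sum_range, mul_sum]
    refine sum_congr (congrArg range (by omega)) fun i hi ↦ ?_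
    rw [show 2 * (n + 1) - (2 + i) + 2 = 2 * n + 1 - 1 - i + 2 by grind, neg_pow]
    ring
  have hgeom := geom_sum₂_mul (-u) v (2 * n + 1)
  rw [Odd.neg_pow ⟨n, rfl⟩] at hgeom
  rw [hsum]
  linear_combination (-(u ^ 2 * v ^ 2)) * hgeom

lemma sum_Icc_neg_one_pow_mul_one_div_pow_eq_tornheimTerm_add {p : ℕ} (hp : 0 < p) (x : ℕ × ℕ) :
    ∑ j ∈ Icc 2 (2 * p), (-1 : ℝ) ^ j *
        (1 / ((x.1 : ℝ) + 1) ^ j * (1 / ((x.2 : ℝ) + 1) ^ (2 * p - j + 2))) =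
      tornheimTerm 1 (2 * p) 1 x + tornheimTerm (2 * p) 1 1 x := by
  have key := add_mul_sum_Icc_neg_one_pow_mul_pow (1 / ((x.1 : ℝ) + 1)) (1 / ((x.2 : ℝ) + 1)) hp
  simp only [one_div_pow] at key ⊢
  have hne : 1 / ((x.1 : ℝ) + 1) + 1 / ((x.2 : ℝ) + 1) ≠ 0 := by positivity
  rw [eq_div_of_mul_eq hne ((mul_comm _ _).trans key), tornheimTerm, tornheimTerm]
  field_simp
  ring

lemma hasSum_one_div_pow_mul_one_div_pow {j k : ℕ} (hj : 1 < j) (hk : 1 < k) :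
    HasSum (fun x : ℕ × ℕ ↦ 1 / ((x.1 : ℝ) + 1) ^ j * (1 / ((x.2 : ℝ) + 1) ^ k))
      ((∑' n : ℕ, 1 / ((n : ℝ) + 1) ^ j) * ∑' n : ℕ, 1 / ((n : ℝ) + 1) ^ k) :=
  (summable_one_div_nat_add_one_pow hj).hasSum.mul (summable_one_div_nat_add_one_pow hk).hasSum
    ((summable_one_div_nat_add_one_pow hj).mul_of_nonneg (summable_one_div_nat_add_one_pow hk)
      (fun _ ↦ by positivity) fun _ ↦ by positivity)

lemma sum_Icc_neg_one_pow_mul_tsum_mul_tsum {p : ℕ} (hp : 0 < p) :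
    ∑ j ∈ Icc 2 (2 * p), (-1 : ℝ) ^ j * ((∑' n : ℕ, 1 / ((n : ℝ) + 1) ^ j) *
        ∑' n : ℕ, 1 / ((n : ℝ) + 1) ^ (2 * p - j + 2)) =
      2 * ∑' x, tornheimTerm (2 * p) 1 1 x := by
  have hsum := hasSum_sum fun j (hj : j ∈ Icc 2 (2 * p)) ↦
    (hasSum_one_div_pow_mul_one_div_pow (j := j) (k := 2 * p - j + 2)
      (by grind) (by grind)).mul_left ((-1 : ℝ) ^ j)
  simp only [sum_Icc_neg_one_pow_mul_one_div_pow_eq_tornheimTerm_add hp] at hsum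
  have hT := (summable_tornheimTerm (q := 2 * p) (by omega)).hasSum
  have hT' : HasSum (tornheimTerm 1 (2 * p) 1) (∑' x, tornheimTerm (2 * p) 1 1 x) :=
    ((Equiv.prodComm ℕ ℕ).hasSum_iff.2 hT).congr_fun fun x ↦ (tornheimTerm_swap _ _ _ x).symm
  exact (hsum.unique (hT'.add hT)).trans (two_mul _).symm

lemma riemannZeta_natCast_eq_ofReal_tsum {k : ℕ} (hk : 1 < k) :
    riemannZeta k = ((∑' n : ℕ, 1 / ((n : ℝ) + 1) ^ k : ℝ) : ℂ) := by
  rw [zeta_eq_tsum_one_div_nat_add_one_cpow (by norm_cast), Complex.ofReal_tsum]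
  push_cast
  simp only [Complex.cpow_natCast]

theorem stmt_9 (p : ℕ) (hp : 0 < p) :
    ((∑' n : ℕ, H (n + 1) / ((n : ℝ) + 1) ^ (2 * p + 1) : ℝ) : ℂ) =
      (1 / 2) * ∑ j ∈ Finset.Icc 2 (2 * p),
        (-1 : ℂ) ^ j * riemannZeta j * riemannZeta (2 * p - j + 2) := by
  have hzeta : ∀ j ∈ Icc 2 (2 * p),
      (-1 : ℂ) ^ j * riemannZeta j * riemannZeta (2 * p - j + 2) =
        (((-1 : ℝ) ^ j * ((∑' n : ℕ, 1 / ((n : ℝ) + 1) ^ j) *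
          ∑' n : ℕ, 1 / ((n : ℝ) + 1) ^ (2 * p - j + 2)) : ℝ) : ℂ) := by
    intro j hj
    obtain ⟨hj₂, hjp⟩ := mem_Icc.1 hj
    have hcast : (2 * p - j + 2 : ℂ) = ((2 * p - j + 2 : ℕ) : ℂ) := by
      push_cast [Nat.cast_sub hjp]
      ring
    rw [hcast, riemannZeta_natCast_eq_ofReal_tsum (by omega),
      riemannZeta_natCast_eq_ofReal_tsum (by omega)]
    push_cast
    ring
  rw [sum_congr rfl hzeta, ← Complex.ofReal_sum, sum_Icc_neg_one_pow_mul_tsum_mul_tsum hp,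
    (hasSum_harmonic_div_pow (by omega : 1 < 2 * p)).tsum_eq]
  push_cast
  ring
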